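/- Let T be a tree with bipartition {A,B}, |A| = l+1 ≤ |B|, and let δ be the minimum degree in T over vertices of A. Let H = H₁ ∨ H₂ be the join of a graph H₁ on l vertices with a graph H₂ on n−l vertices. If the maximum degree of H₂ is at most δ−1 and at most one vertex of H₂ has degree exactly δ−1, then H contains no subgraph isomorphic to T. -/

import Mathlib

open scoped Classical

/-- `G` contains a copy of `T` (a subgraph isomorphic to `T`). -/
def ContainsCopy {V W : Type*} (T : SimpleGraph V) (G : SimpleGraph W) : Prop :=
  ∃ f : V → W, Function.Injective f ∧ ∀ ⦃a b⦄, T.Adj a b → G.Adj (f a) (f b)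

/-- The join `G ∨ H` of two graphs: their disjoint union together with all edges
between the two vertex sets. -/
def graphJoin {α β : Type*} (G : SimpleGraph α) (H : SimpleGraph β) : SimpleGraph (α ⊕ β) where
  Adj x y :=
    match x, y with
    | Sum.inl a, Sum.inl b => G.Adj a b
    | Sum.inr a, Sum.inr b => H.Adj a b
    | Sum.inl _, Sum.inr _ => True
    | Sum.inr _, Sum.inl _ => True
  symm := by
    constructor
    rintro (a|a) (b|b) h
    · exact G.symm.symm _ _ h
    · trivial
    · trivial
    · exact H.symm.symm _ _ h
  loopless := by
    constructor
    rintro (a|a) h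
    · exact G.loopless.irrefl a h
    · exact H.loopless.irrefl a h

/-!
Let `f` embed `T` into `H₁ ∨ H₂` and let `B = Aᶜ`. Since `|A| = l + 1` exceeds the `l` vertices
of `H₁`, the set `S` of vertices of `A` sent into `H₂` is larger than the set `W` of vertices of
`B` sent into `H₁`. A vertex `u ∈ S` has at most `deg_{H₂} (f u) ≤ δ - 1` neighbours sent into
`H₂`, and its other neighbours lie in `W`. So every `u ∈ S` has a neighbour in `W`, and all but
at most one have two: the forest `T` has at least `2|S| - 1` edges between `S` and `W`, whereas a
forest on `|S| + |W| ≤ 2|S| - 1` vertices has fewer edges than that.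
-/

open Finset

namespace SimpleGraph

variable {V : Type*} [Fintype V] {G : SimpleGraph V}

theorem IsAcyclic.card_edgeFinset_lt [Nonempty V] [Fintype G.edgeSet] (hG : G.IsAcyclic) :
    #G.edgeFinset < Fintype.card V := by
  obtain ⟨F, hGF, hF⟩ := exists_maximal_isAcyclic_of_le_isAcyclic (le_top : G ≤ ⊤) hG
  have hFtree : F.IsTree := (connected_top.maximal_le_isAcyclic_iff_isTree hF.prop.1).mp hF
  calc #G.edgeFinset ≤ #F.edgeFinset := card_le_card (edgeFinset_mono hGF)
    _ < Fintype.card V := by have := hFtree.card_edgeFinset; omega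

theorem IsAcyclic.card_edgeFinset_lt_of_support_subset [DecidableRel G.Adj] (hG : G.IsAcyclic)
    {s : Finset V} (hs : s.Nonempty) (h : G.support ⊆ s) : #G.edgeFinset < #s := by
  have : Nonempty s := hs.to_subtype
  rw [← card_edgeFinset_induce_of_support_subset h]
  convert (hG.induce s).card_edgeFinset_lt
  simp

theorem IsAcyclic.sum_degree_between_lt [DecidableEq V] (hG : G.IsAcyclic) {s t : Finset V}
    (hst : Disjoint s t) (hs : s.Nonempty) : ∑ v ∈ s, (G.between s t).degree v < #s + #t := by
  have hbip := between_isBipartiteWith (G := G) (disjoint_coe.mpr hst)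
  rw [isBipartiteWith_sum_degrees_eq_card_edges hbip, ← card_union_of_disjoint hst]
  exact (hG.anti between_le).card_edgeFinset_lt_of_support_subset (hs.mono subset_union_left)
    (by simpa using isBipartiteWith_support_subset hbip)

end SimpleGraph

theorem Finset.two_mul_card_le_sum_add_one {ι : Type*} (s : Finset ι) (f : ι → ℕ)
    (hpos : ∀ i ∈ s, 1 ≤ f i) (hlt : ∀ i ∈ s, ∀ j ∈ s, f i < 2 → f j < 2 → i = j) :
    2 * #s ≤ ∑ i ∈ s, f i + 1 := by
  classical
  have hsmall : #{i ∈ s | f i < 2} ≤ 1 := card_le_one.mpr fun i hi j hj => by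
    simp only [mem_filter] at hi hj
    exact hlt i hi.1 j hj.1 hi.2 hj.2
  calc 2 * #s = ∑ i ∈ s, 2 := by rw [sum_const, smul_eq_mul, mul_comm]
    _ ≤ ∑ i ∈ s, (f i + if f i < 2 then 1 else 0) :=
        sum_le_sum fun i hi => by have := hpos i hi; split_ifs <;> omega
    _ = ∑ i ∈ s, f i + #{i ∈ s | f i < 2} := by rw [sum_add_distrib, card_filter]
    _ ≤ ∑ i ∈ s, f i + 1 := by omega

section JoinEmbedding

open SimpleGraph

variable {V α β : Type*} [Fintype V] {T : SimpleGraph V} {H₁ : SimpleGraph α}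
  {H₂ : SimpleGraph β} {f : V → α ⊕ β}

@[simp]
theorem graphJoin_adj_inr_inr {a b : β} : (graphJoin H₁ H₂).Adj (.inr a) (.inr b) ↔ H₂.Adj a b :=
  Iff.rfl

theorem card_filter_isLeft_le [Fintype α] (hf : Function.Injective f) :
    #{v | (f v).isLeft} ≤ Fintype.card α := by
  rw [← card_univ, ← card_map (Function.Embedding.inl (β := β)) (s := univ)]
  refine card_le_card_of_injOn f (fun v hv => ?_) hf.injOn
  obtain ⟨a, ha⟩ := Sum.isLeft_iff.mp (mem_filter.mp hv).2
  simp [ha]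

theorem degree_le_degree_between_add_degree [DecidableRel T.Adj] [Fintype β]
    [DecidableRel H₂.Adj] (hf : Function.Injective f)
    (hadj : ∀ ⦃a b⦄, T.Adj a b → (graphJoin H₁ H₂).Adj (f a) (f b))
    {S W : Finset V} {u : V} {b : β} (hu : f u = .inr b) (huS : u ∈ S)
    (hW : ∀ v, T.Adj u v → (f v).isLeft → v ∈ W) :
    T.degree u ≤ (T.between S W).degree u + H₂.degree b := by
  rw [← card_neighborFinset_eq_degree, ← card_filter_add_card_filter_not (fun v => (f v).isLeft)]
  gcongr
  · rw [← card_neighborFinset_eq_degree]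
    refine card_le_card fun v hv => ?_
    obtain ⟨huv, hvl⟩ := mem_filter.mp hv
    rw [mem_neighborFinset] at huv
    simp [between_adj, huv, huS, hW v huv hvl]
  · rw [← card_neighborFinset_eq_degree,
      ← card_map (Function.Embedding.inr (α := α)) (s := H₂.neighborFinset b)]
    refine card_le_card_of_injOn f (fun v hv => ?_) hf.injOn
    obtain ⟨huv, hvr⟩ := mem_filter.mp hv
    obtain ⟨c, hc⟩ := Sum.isRight_iff.mp (by simpa using hvr)
    simpa [hc, hu] using hadj ((mem_neighborFinset _ _ _).mp huv)

theorem card_filter_compl_isLeft_lt_card_filter_isRight [Fintype α] (hf : Function.Injective f)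
    {A : Finset V} (hA : Fintype.card α < #A) :
    #{v ∈ Aᶜ | (f v).isLeft} < #{v ∈ A | (f v).isRight} := by
  have hsplit := card_filter_add_card_filter_not (s := A) (fun v => (f v).isRight)
  have hleft : #{v ∈ A | ¬(f v).isRight} + #{v ∈ Aᶜ | (f v).isLeft} ≤ Fintype.card α := by
    rw [← card_union_of_disjoint (disjoint_filter_filter disjoint_compl_right)]
    refine (card_le_card fun v hv => ?_).trans (card_filter_isLeft_le hf)
    simp only [mem_union, mem_filter, Sum.not_isRight] at hv
    simpa using hv.elim And.right And.right
  omega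

end JoinEmbedding

theorem tree_not_embeds_in_join_of_maxDegree_lt_general {V α β : Type*} [Fintype V] [Fintype α] [Fintype β]
    (T : SimpleGraph V) (hT : T.IsTree) (l δ : ℕ)
    (A : Finset V) (hbip : ∀ ⦃u v⦄, T.Adj u v → (u ∈ A ↔ v ∉ A))
    (hA : A.card = l + 1) (hAB : A.card ≤ Aᶜ.card)
    (hδmin : ∀ v ∈ A, δ ≤ T.degree v) (hδmem : ∃ v ∈ A, T.degree v = δ)
    (H₁ : SimpleGraph α) (H₂ : SimpleGraph β)
    (hα : Fintype.card α = l)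
    (hmax : ∀ v : β, H₂.degree v ≤ δ - 1)
    (hone : ∀ u v : β, H₂.degree u = δ - 1 → H₂.degree v = δ - 1 → u = v) :
    ¬ ContainsCopy T (graphJoin H₁ H₂) := by
  rintro ⟨f, hf, hadj⟩
  have hδ : 1 ≤ δ := by
    obtain ⟨v, hvA, rfl⟩ := hδmem
    obtain ⟨w, hw⟩ := card_pos.mp (by omega : 0 < #Aᶜ)
    exact (hT.connected v w).degree_pos_left (by rintro rfl; exact mem_compl.mp hw hvA)
  set S : Finset V := {v ∈ A | (f v).isRight}
  set W : Finset V := {v ∈ Aᶜ | (f v).isLeft}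
  have hWS : #W < #S := card_filter_compl_isLeft_lt_card_filter_isRight hf (by omega)
  have hdeg : ∀ u ∈ S, ∃ b, f u = .inr b ∧ δ ≤ (T.between S W).degree u + H₂.degree b := by
    intro u hu
    obtain ⟨huA, hur⟩ := mem_filter.mp hu
    obtain ⟨b, hb⟩ := Sum.isRight_iff.mp hur
    refine ⟨b, hb, (hδmin u huA).trans (degree_le_degree_between_add_degree hf hadj hb hu ?_)⟩
    exact fun v huv hvl => mem_filter.mpr ⟨mem_compl.mpr ((hbip huv).mp huA), hvl⟩
  have hpos : ∀ u ∈ S, 1 ≤ (T.between S W).degree u := fun u hu => by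
    obtain ⟨b, -, hb⟩ := hdeg u hu
    have := hmax b
    omega
  have huniq : ∀ u ∈ S, ∀ u' ∈ S,
      (T.between S W).degree u < 2 → (T.between S W).degree u' < 2 → u = u' := by
    intro u hu u' hu' h h'
    obtain ⟨b, hb, hbδ⟩ := hdeg u hu
    obtain ⟨b', hb', hbδ'⟩ := hdeg u' hu'
    have hbb' : b = b' := hone b b' (by have := hmax b; omega) (by have := hmax b'; omega)
    exact hf (by rw [hb, hb', hbb'])
  have hlower := two_mul_card_le_sum_add_one S _ hpos huniq
  have hupper := hT.isAcyclic.sum_degree_between_lt (s := S) (t := W)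
    (disjoint_filter_filter disjoint_compl_right) (card_pos.mp (by omega))
  omega

/-- Let `T` be a tree with bipartition `{A, B}`, `|A| = l+1 ≤ |B|`, and let `δ` be the
minimum degree in `T` over vertices of `A`.  Let `H = H₁ ∨ H₂` be the join of a graph
`H₁` on `l` vertices with a graph `H₂` on `n − l` vertices.  If the maximum degree of
`H₂` is at most `δ − 1` and at most one vertex of `H₂` has degree exactly `δ − 1`,
then `H` contains no copy of `T`. -/
theorem tree_not_embeds_in_join_of_maxDegree_lt {V α β : Type*} [Fintype V] [Fintype α] [Fintype β]
    (T : SimpleGraph V) (hT : T.IsTree) (l n δ : ℕ)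
    (A : Finset V) (hbip : ∀ ⦃u v⦄, T.Adj u v → (u ∈ A ↔ v ∉ A))
    (hA : A.card = l + 1) (hAB : A.card ≤ Aᶜ.card)
    (hδmin : ∀ v ∈ A, δ ≤ T.degree v) (hδmem : ∃ v ∈ A, T.degree v = δ)
    (H₁ : SimpleGraph α) (H₂ : SimpleGraph β)
    (hα : Fintype.card α = l) (hβ : Fintype.card β = n - l) (hln : l ≤ n)
    (hmax : ∀ v : β, H₂.degree v ≤ δ - 1)
    (hone : ∀ u v : β, H₂.degree u = δ - 1 → H₂.degree v = δ - 1 → u = v) :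
    ¬ ContainsCopy T (graphJoin H₁ H₂) :=
  tree_not_embeds_in_join_of_maxDegree_lt_general T hT l δ A hbip hA hAB hδmin hδmem H₁ H₂ hα hmax
    hone
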